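/- arXiv:1310.2008 — 9 statements merged into one kernel-verified Lean document; each statement's English description precedes it below -/
import Mathlib

section
/- Let A ∈ ℝ^{m×n}, let S_u ⊆ ℝ^m and S_v ⊆ ℝ^n be linear subspaces, and let S = { (u; v) : u ∈ S_u, v ∈ S_v }. Suppose z* = (u*; v*) ∈ S is nonzero and maximizes the Rayleigh quotient ρ(z) = 2 uᵀ A v / (‖u‖² + ‖v‖²) over all nonzero z ∈ S, and suppose ρ(z*) > 0. Then ‖u*‖ = ‖v*‖. -/
/-!
Rescaling `(u, v) ↦ (t • u, t⁻¹ • v)` leaves the bilinear numerator `2 β(u, v)` unchanged, while the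
denominator `‖t • u‖² + ‖t⁻¹ • v‖²` attains its minimum `2 ‖u‖ ‖v‖` at `t = √(‖v‖ / ‖u‖)`. If the
quotient is positive and maximal at `(u, v)`, the denominator must already be minimal there, i.e.
`‖u‖² + ‖v‖² ≤ 2 ‖u‖ ‖v‖`, which forces `‖u‖ = ‖v‖`.
-/

open Matrix

section RayleighQuotient

variable {E F : Type*} [NormedAddCommGroup E] [NormedSpace ℝ E]
  [NormedAddCommGroup F] [NormedSpace ℝ F]

noncomputable def rayleighQuotient (β : E →ₗ[ℝ] F →ₗ[ℝ] ℝ) (u : E) (v : F) : ℝ :=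
  2 * β u v / (‖u‖ ^ 2 + ‖v‖ ^ 2)

lemma exists_pos_norm_smul_sq_add_norm_inv_smul_sq_eq {u : E} {v : F} (hu : u ≠ 0) (hv : v ≠ 0) :
    ∃ t : ℝ, 0 < t ∧ ‖t • u‖ ^ 2 + ‖t⁻¹ • v‖ ^ 2 = 2 * (‖u‖ * ‖v‖) := by
  have ha : 0 < ‖u‖ := norm_pos_iff.mpr hu
  have hb : 0 < ‖v‖ := norm_pos_iff.mpr hv
  set t := √(‖v‖ / ‖u‖)
  have ht : 0 < t := Real.sqrt_pos.mpr (by positivity)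
  have ht2 : t ^ 2 = ‖v‖ / ‖u‖ := Real.sq_sqrt (by positivity)
  refine ⟨t, ht, ?_⟩
  rw [norm_smul, norm_smul, Real.norm_of_nonneg ht.le, Real.norm_of_nonneg (inv_nonneg.mpr ht.le),
    mul_pow, mul_pow, inv_pow, ht2]
  field_simp
  ring

lemma rayleighQuotient_smul_inv_smul (β : E →ₗ[ℝ] F →ₗ[ℝ] ℝ) (u : E) (v : F) {t : ℝ} (ht : t ≠ 0) :
    rayleighQuotient β (t • u) (t⁻¹ • v) = 2 * β u v / (‖t • u‖ ^ 2 + ‖t⁻¹ • v‖ ^ 2) := by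
  simp [rayleighQuotient, ht]

lemma map_pos_of_rayleighQuotient_pos {β : E →ₗ[ℝ] F →ₗ[ℝ] ℝ} {u : E} {v : F}
    (h : 0 < rayleighQuotient β u v) : 0 < β u v := by
  by_contra! hβ
  exact h.not_ge (div_nonpos_of_nonpos_of_nonneg (by linarith) (by positivity))

theorem norm_eq_norm_of_rayleighQuotient_le {β : E →ₗ[ℝ] F →ₗ[ℝ] ℝ} {u : E} {v : F}
    (hpos : 0 < rayleighQuotient β u v)
    (hmax : ∀ t : ℝ, 0 < t → rayleighQuotient β (t • u) (t⁻¹ • v) ≤ rayleighQuotient β u v) :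
    ‖u‖ = ‖v‖ := by
  have hβ : 0 < β u v := map_pos_of_rayleighQuotient_pos hpos
  have hu : u ≠ 0 := by rintro rfl; simp at hβ
  have hv : v ≠ 0 := by rintro rfl; simp at hβ
  obtain ⟨t, ht, hden⟩ := exists_pos_norm_smul_sq_add_norm_inv_smul_sq_eq hu hv
  have hle := hmax t ht
  rw [rayleighQuotient_smul_inv_smul β u v ht.ne', hden, rayleighQuotient,
    div_le_div_iff_of_pos_left (by positivity) (by positivity)
      (by positivity [norm_pos_iff.mpr hu])] at hle
  have hsq : (‖u‖ - ‖v‖) ^ 2 = 0 := le_antisymm (by nlinarith) (sq_nonneg _)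
  exact sub_eq_zero.mp (pow_eq_zero_iff two_ne_zero |>.mp hsq)

end RayleighQuotient

theorem rayleigh_quotient_pos_maximizer_norm_eq_general {m n : ℕ}
    (A : Matrix (Fin m) (Fin n) ℝ)
    (Su : Submodule ℝ (EuclideanSpace ℝ (Fin m)))
    (Sv : Submodule ℝ (EuclideanSpace ℝ (Fin n)))
    (ustar : EuclideanSpace ℝ (Fin m)) (vstar : EuclideanSpace ℝ (Fin n))
    (hu : ustar ∈ Su) (hv : vstar ∈ Sv)
    (hmax : ∀ u ∈ Su, ∀ v ∈ Sv, (u, v) ≠ 0 →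
      2 * (u ⬝ᵥ A.mulVec v) / (‖u‖ ^ 2 + ‖v‖ ^ 2) ≤
        2 * (ustar ⬝ᵥ A.mulVec vstar) / (‖ustar‖ ^ 2 + ‖vstar‖ ^ 2))
    (hpos : 0 < 2 * (ustar ⬝ᵥ A.mulVec vstar) / (‖ustar‖ ^ 2 + ‖vstar‖ ^ 2)) :
    ‖ustar‖ = ‖vstar‖ := by
  let β := (toLinearMap₂' ℝ A).compl₁₂ (WithLp.linearEquiv 2 ℝ (Fin m → ℝ)).toLinearMap
    (WithLp.linearEquiv 2 ℝ (Fin n → ℝ)).toLinearMap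
  have hβ : ∀ u v, rayleighQuotient β u v = 2 * (u ⬝ᵥ A.mulVec v) / (‖u‖ ^ 2 + ‖v‖ ^ 2) := by
    simp [β, rayleighQuotient, toLinearMap₂'_apply']
  refine norm_eq_norm_of_rayleighQuotient_le (β := β) (by rwa [hβ]) fun t ht => ?_
  have hne : (t • ustar, t⁻¹ • vstar) ≠ 0 := by
    intro h
    simp only [Prod.mk_eq_zero, smul_eq_zero, ht.ne', inv_eq_zero, false_or] at h
    simp [h.1, h.2] at hpos
  rw [hβ, hβ]
  exact hmax _ (Su.smul_mem t hu) _ (Sv.smul_mem t⁻¹ hv) hne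

/-- If a nonzero `z* = (u*; v*)` in the product-structured subspace `S_u × S_v` maximizes
the Rayleigh quotient `ρ(z) = 2 uᵀ A v / (‖u‖² + ‖v‖²)` over all nonzero `z ∈ S_u × S_v`,
and the maximum is positive, then `‖u*‖ = ‖v*‖`. -/
theorem rayleigh_quotient_pos_maximizer_norm_eq {m n : ℕ}
    (A : Matrix (Fin m) (Fin n) ℝ)
    (Su : Submodule ℝ (EuclideanSpace ℝ (Fin m)))
    (Sv : Submodule ℝ (EuclideanSpace ℝ (Fin n)))
    (ustar : EuclideanSpace ℝ (Fin m)) (vstar : EuclideanSpace ℝ (Fin n))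
    (hu : ustar ∈ Su) (hv : vstar ∈ Sv) (hne : (ustar, vstar) ≠ 0)
    (hmax : ∀ u ∈ Su, ∀ v ∈ Sv, (u, v) ≠ 0 →
      2 * (u ⬝ᵥ A.mulVec v) / (‖u‖ ^ 2 + ‖v‖ ^ 2) ≤
        2 * (ustar ⬝ᵥ A.mulVec vstar) / (‖ustar‖ ^ 2 + ‖vstar‖ ^ 2))
    (hpos : 0 < 2 * (ustar ⬝ᵥ A.mulVec vstar) / (‖ustar‖ ^ 2 + ‖vstar‖ ^ 2)) :
    ‖ustar‖ = ‖vstar‖ :=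
  rayleigh_quotient_pos_maximizer_norm_eq_general A Su Sv ustar vstar hu hv hmax hpos
end

section
/- (Min-max characterization of Ritz singular values.) Let A ∈ ℝ^{m×n}, and let U ∈ ℝ^{m×s₁}, V ∈ ℝ^{n×s₂} have orthonormal columns; set s = s₁ + s₂ and let θ₁ ≥ θ₂ ≥ … be the singular values of H = Uᵀ A V in decreasing order. Then for every i = 1, …, min(s₁, s₂): θᵢ = min over subspaces S_u ⊆ span(U) and S_v ⊆ span(V) with dim(S_u) + dim(S_v) = s − i + 1, of the maximum of uᵀ A v over u ∈ S_u, v ∈ S_v with ‖u‖ = ‖v‖ = 1. -/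
open Matrix

/-- The `i`-th largest singular value (0-based) of a real `m×n` matrix:
the square root of the `i`-th largest eigenvalue of `Aᵀ A`, and `0` for `i ≥ n`. -/
noncomputable def singularValue {m n : ℕ} (A : Matrix (Fin m) (Fin n) ℝ) (i : ℕ) : ℝ :=
  if h : i < n then
    Real.sqrt (((show (Aᵀ * A).IsHermitian by simpa using Matrix.isHermitian_conjTranspose_mul_self A).eigenvalues ∘
      Tuple.sort ((show (Aᵀ * A).IsHermitian by simpa using Matrix.isHermitian_conjTranspose_mul_self A).eigenvalues))
      ((⟨i, h⟩ : Fin n).rev))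
  else 0

/-!
The maps `x ↦ U x` and `y ↦ V y` are isometries onto `span(U)` and `span(V)` and turn `uᵀ A v`
into `⟪x, H y⟫` with `H = Uᵀ A V`, so it suffices to prove the min-max formula for `H` on the
whole of `ℝ^{s₁} × ℝ^{s₂}`. Let `b` be an orthonormal eigenbasis of `Hᵀ H`: the vectors `H bⱼ` are
pairwise orthogonal and `‖H bⱼ‖ = σⱼ`, so on the span of some `bⱼ` the ratio `‖H y‖ / ‖y‖` lies
between the extreme `σⱼ` involved. Taking `S_x` to be everything and `S_y` the span of the
`s₂ - i` eigenvectors with the smallest `σⱼ`, Cauchy–Schwarz shows the maximum is `θᵢ`.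
Conversely, for admissible `S_x`, `S_y` a dimension count gives a unit `y ∈ S_y` in the span of
the `i + 1` eigenvectors with the largest `σⱼ` such that `H y ∈ S_x`; then `x = H y / ‖H y‖`
(any unit `x ∈ S_x` if `H y = 0`) gives `⟪x, H y⟫ = ‖H y‖ ≥ θᵢ`.
-/

open Module RealInnerProductSpace

namespace Submodule

variable {K V W : Type*} [DivisionRing K] [AddCommGroup V] [Module K V] [FiniteDimensional K V]
  [AddCommGroup W] [Module K W] [FiniteDimensional K W]

theorem finrank_add_finrank_le_finrank_inf_add (s t : Submodule K V) :
    finrank K s + finrank K t ≤ finrank K ↥(s ⊓ t) + finrank K V := by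
  rw [← finrank_sup_add_finrank_inf_eq]
  have := (s ⊔ t).finrank_le
  omega

theorem finrank_add_finrank_le_finrank_comap_add (f : V →ₗ[K] W) (p : Submodule K W) :
    finrank K V + finrank K p ≤ finrank K (p.comap f) + finrank K W := by
  have hrank := LinearMap.finrank_range_add_finrank_ker (p.mkQ ∘ₗ f)
  have hquot := p.finrank_quotient_add_finrank
  have hrange := (LinearMap.range (p.mkQ ∘ₗ f)).finrank_le
  rw [LinearMap.ker_comp, ker_mkQ] at hrank
  omega

theorem exists_mem_inf_ne_zero_apply_mem (f : V →ₗ[K] W) {p : Submodule K W}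
    {q r : Submodule K V}
    (h : finrank K V + finrank K W < finrank K p + finrank K q + finrank K r) :
    ∃ x ∈ q ⊓ r, x ≠ 0 ∧ f x ∈ p := by
  have hqr := finrank_add_finrank_le_finrank_inf_add q r
  have hqrp := finrank_add_finrank_le_finrank_inf_add (q ⊓ r) (p.comap f)
  have hp := finrank_add_finrank_le_finrank_comap_add f p
  obtain ⟨x, hx, hx₀⟩ := exists_mem_ne_zero_of_ne_bot fun hbot : q ⊓ r ⊓ p.comap f = ⊥ => by
    rw [hbot, finrank_bot] at hqrp
    omega
  exact ⟨x, hx.1, hx₀, hx.2⟩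

end Submodule

namespace OrthonormalBasis

variable {ι E F : Type*} [Fintype ι] [NormedAddCommGroup E] [InnerProductSpace ℝ E]
  [NormedAddCommGroup F] [InnerProductSpace ℝ F] (b : OrthonormalBasis ι ℝ E) (T : E →ₗ[ℝ] F)

theorem repr_eq_zero_of_mem_span_image {s : Set ι} {y : E} (hy : y ∈ Submodule.span ℝ (b '' s))
    {j : ι} (hj : j ∉ s) : b.repr y j = 0 := by
  rw [← b.coe_toBasis, b.toBasis.mem_span_image] at hy
  rw [← b.coe_toBasis_repr_apply, ← Finsupp.notMem_support_iff]
  exact fun h => hj (hy h)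

theorem finrank_span_image (s : Finset ι) :
    finrank ℝ (Submodule.span ℝ (b '' s)) = s.card := by
  rw [Set.image_eq_range, ← Fintype.card_coe]
  exact finrank_span_eq_card (b.orthonormal.linearIndependent.comp _ Subtype.val_injective)

theorem norm_apply_sq_eq_sum (hT : Pairwise fun j k => ⟪T (b j), T (b k)⟫ = 0) (y : E) :
    ‖T y‖ ^ 2 = ∑ j, b.repr y j ^ 2 * ‖T (b j)‖ ^ 2 := by
  conv_lhs => rw [← b.sum_repr y]
  rw [map_sum, ← real_inner_self_eq_norm_sq, sum_inner]
  refine Finset.sum_congr rfl fun j _ => ?_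
  rw [inner_sum, Finset.sum_eq_single j (fun k _ hkj => by
    rw [map_smul, map_smul, real_inner_smul_left, real_inner_smul_right, hT hkj.symm, mul_zero,
      mul_zero]) (by simp)]
  rw [map_smul, real_inner_smul_left, real_inner_smul_right, real_inner_self_eq_norm_sq]
  ring

theorem norm_apply_sq_eq_sum_of_mem_span (hT : Pairwise fun j k => ⟪T (b j), T (b k)⟫ = 0)
    {s : Finset ι} {y : E} (hy : y ∈ Submodule.span ℝ (b '' s)) :
    ‖T y‖ ^ 2 = ∑ j ∈ s, b.repr y j ^ 2 * ‖T (b j)‖ ^ 2 := by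
  rw [b.norm_apply_sq_eq_sum T hT]
  refine (Finset.sum_subset s.subset_univ fun j _ hj => ?_).symm
  rw [b.repr_eq_zero_of_mem_span_image hy hj]
  ring

theorem norm_sq_eq_sum_of_mem_span {s : Finset ι} {y : E} (hy : y ∈ Submodule.span ℝ (b '' s)) :
    ‖y‖ ^ 2 = ∑ j ∈ s, b.repr y j ^ 2 := by
  simpa [b.orthonormal.1] using
    b.norm_apply_sq_eq_sum_of_mem_span LinearMap.id b.orthonormal.2 hy

theorem norm_apply_le_of_mem_span (hT : Pairwise fun j k => ⟪T (b j), T (b k)⟫ = 0)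
    {s : Finset ι} {c : ℝ} (hc₀ : 0 ≤ c) (hc : ∀ j ∈ s, ‖T (b j)‖ ≤ c) {y : E}
    (hy : y ∈ Submodule.span ℝ (b '' s)) : ‖T y‖ ≤ c * ‖y‖ := by
  refine le_of_pow_le_pow_left₀ two_ne_zero (by positivity) ?_
  rw [b.norm_apply_sq_eq_sum_of_mem_span T hT hy, mul_pow, mul_comm (c ^ 2),
    b.norm_sq_eq_sum_of_mem_span hy, Finset.sum_mul]
  gcongr with j hj
  exact hc j hj

theorem le_norm_apply_of_mem_span (hT : Pairwise fun j k => ⟪T (b j), T (b k)⟫ = 0)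
    {s : Finset ι} {c : ℝ} (hc₀ : 0 ≤ c) (hc : ∀ j ∈ s, c ≤ ‖T (b j)‖) {y : E}
    (hy : y ∈ Submodule.span ℝ (b '' s)) : c * ‖y‖ ≤ ‖T y‖ := by
  refine le_of_pow_le_pow_left₀ two_ne_zero (norm_nonneg _) ?_
  rw [b.norm_apply_sq_eq_sum_of_mem_span T hT hy, mul_pow, mul_comm (c ^ 2),
    b.norm_sq_eq_sum_of_mem_span hy, Finset.sum_mul]
  gcongr with j hj
  exact hc j hj

end OrthonormalBasis

def unitSphereValues {E F : Type*} [NormedAddCommGroup E] [Module ℝ E] [NormedAddCommGroup F]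
    [Module ℝ F] (B : E → F → ℝ) (p : Submodule ℝ E) (q : Submodule ℝ F) : Set ℝ :=
  {c | ∃ u ∈ p, ∃ v ∈ q, ‖u‖ = 1 ∧ ‖v‖ = 1 ∧ c = B u v}

section UnitSphereValues

variable {E F E' F' : Type*} [NormedAddCommGroup E] [InnerProductSpace ℝ E]
  [NormedAddCommGroup F] [InnerProductSpace ℝ F] [NormedAddCommGroup E'] [InnerProductSpace ℝ E']
  [NormedAddCommGroup F'] [InnerProductSpace ℝ F']

theorem ne_bot_of_mem_unitSphereValues {B : E → F → ℝ} {p : Submodule ℝ E} {q : Submodule ℝ F}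
    {c : ℝ} (hc : c ∈ unitSphereValues B p q) : p ≠ ⊥ := by
  obtain ⟨u, hu, -, -, hu₁, -⟩ := hc
  rintro rfl
  simp [(Submodule.mem_bot ℝ).mp hu] at hu₁

theorem Submodule.exists_norm_eq_one_inner_eq_norm {p : Submodule ℝ E} (hp : p ≠ ⊥) {w : E}
    (hw : w ∈ p) : ∃ x ∈ p, ‖x‖ = 1 ∧ ⟪x, w⟫ = ‖w‖ := by
  by_cases hw₀ : w = 0
  · obtain ⟨v, hv, hv₀⟩ := p.exists_mem_ne_zero_of_ne_bot hp
    exact ⟨‖v‖⁻¹ • v, p.smul_mem _ hv, norm_smul_inv_norm hv₀, by simp [hw₀]⟩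
  · refine ⟨‖w‖⁻¹ • w, p.smul_mem _ hw, norm_smul_inv_norm hw₀, ?_⟩
    rw [real_inner_smul_left, real_inner_self_eq_norm_sq, sq, inv_mul_cancel_left₀]
    exact norm_ne_zero_iff.mpr hw₀

theorem norm_apply_mem_unitSphereValues_inner (T : E →ₗ[ℝ] F) {p : Submodule ℝ F}
    {q : Submodule ℝ E} (hp : p ≠ ⊥) {y : E} (hy : y ∈ q) (hy₁ : ‖y‖ = 1) (hTy : T y ∈ p) :
    ‖T y‖ ∈ unitSphereValues (fun x y => ⟪x, T y⟫) p q := by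
  obtain ⟨x, hx, hx₁, hxy⟩ := p.exists_norm_eq_one_inner_eq_norm hp hTy
  exact ⟨x, hx, y, hy, hx₁, hy₁, hxy.symm⟩

theorem exists_le_norm_apply_of_mem_unitSphereValues_inner (T : E →ₗ[ℝ] F) {p : Submodule ℝ F}
    {q : Submodule ℝ E} {c : ℝ} (hc : c ∈ unitSphereValues (fun x y => ⟪x, T y⟫) p q) :
    ∃ y ∈ q, ‖y‖ = 1 ∧ c ≤ ‖T y‖ := by
  obtain ⟨x, -, y, hy, hx₁, hy₁, rfl⟩ := hc
  refine ⟨y, hy, hy₁, ?_⟩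
  simpa [hx₁] using real_inner_le_norm x (T y)

theorem unitSphereValues_map (f : E →ₗᵢ[ℝ] E') (g : F →ₗᵢ[ℝ] F') (B : E' → F' → ℝ)
    (p : Submodule ℝ E) (q : Submodule ℝ F) :
    unitSphereValues B (p.map f.toLinearMap) (q.map g.toLinearMap) =
      unitSphereValues (fun x y => B (f x) (g y)) p q := by
  ext c
  constructor
  · rintro ⟨_, ⟨x, hx, rfl⟩, _, ⟨y, hy, rfl⟩, hx₁, hy₁, rfl⟩
    exact ⟨x, hx, y, hy, by simpa using hx₁, by simpa using hy₁, rfl⟩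
  · rintro ⟨x, hx, y, hy, hx₁, hy₁, rfl⟩
    exact ⟨f x, p.mem_map_of_mem hx, g y, q.mem_map_of_mem hy, by simpa using hx₁,
      by simpa using hy₁, rfl⟩

theorem LinearIsometry.finrank_map (f : E →ₗᵢ[ℝ] E') (p : Submodule ℝ E) :
    finrank ℝ (p.map f.toLinearMap) = finrank ℝ p :=
  (Submodule.equivMapOfInjective _ f.injective p).finrank_eq.symm

theorem setOf_isGreatest_unitSphereValues_le_range_eq (f : E →ₗᵢ[ℝ] E') (g : F →ₗᵢ[ℝ] F')
    (B : E' → F' → ℝ) (k : ℕ) :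
    {r | ∃ (p : Submodule ℝ E') (q : Submodule ℝ F'), p ≤ LinearMap.range f.toLinearMap ∧
        q ≤ LinearMap.range g.toLinearMap ∧ finrank ℝ p + finrank ℝ q = k ∧
        IsGreatest (unitSphereValues B p q) r} =
      {r | ∃ (p : Submodule ℝ E) (q : Submodule ℝ F), finrank ℝ p + finrank ℝ q = k ∧
        IsGreatest (unitSphereValues (fun x y => B (f x) (g y)) p q) r} := by
  ext r
  constructor
  · rintro ⟨p, q, hp, hq, hk, hr⟩
    obtain ⟨p, rfl⟩ : ∃ p' : Submodule ℝ E, p = p'.map f.toLinearMap :=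
      ⟨_, (p.map_comap_eq_of_le hp).symm⟩
    obtain ⟨q, rfl⟩ : ∃ q' : Submodule ℝ F, q = q'.map g.toLinearMap :=
      ⟨_, (q.map_comap_eq_of_le hq).symm⟩
    rw [f.finrank_map, g.finrank_map] at hk
    rw [unitSphereValues_map] at hr
    exact ⟨p, q, hk, hr⟩
  · rintro ⟨p, q, hk, hr⟩
    refine ⟨p.map f.toLinearMap, q.map g.toLinearMap, LinearMap.map_le_range,
      LinearMap.map_le_range, ?_, ?_⟩
    · rwa [f.finrank_map, g.finrank_map]
    · rwa [unitSphereValues_map]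

end UnitSphereValues

theorem OrthonormalBasis.isLeast_minimax_norm_apply {ι E F : Type*} [Fintype ι]
    [NormedAddCommGroup E] [InnerProductSpace ℝ E] [FiniteDimensional ℝ E]
    [NormedAddCommGroup F] [InnerProductSpace ℝ F] [FiniteDimensional ℝ F] [Nontrivial F]
    (b : OrthonormalBasis ι ℝ E) (T : E →ₗ[ℝ] F)
    (hT : Pairwise fun j k => ⟪T (b j), T (b k)⟫ = 0) {lo hi : Finset ι} {j₀ : ι} (hj₀ : j₀ ∈ lo)
    (hlo : ∀ j ∈ lo, ‖T (b j)‖ ≤ ‖T (b j₀)‖) (hhi : ∀ j ∈ hi, ‖T (b j₀)‖ ≤ ‖T (b j)‖)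
    (hcard : finrank ℝ E < lo.card + hi.card) :
    IsLeast {r | ∃ (p : Submodule ℝ F) (q : Submodule ℝ E),
        finrank ℝ p + finrank ℝ q = finrank ℝ F + lo.card ∧
        IsGreatest (unitSphereValues (fun x y => ⟪x, T y⟫) p q) r} ‖T (b j₀)‖ := by
  refine ⟨⟨⊤, Submodule.span ℝ (b '' lo), by rw [finrank_top, b.finrank_span_image], ?_, ?_⟩, ?_⟩
  · exact norm_apply_mem_unitSphereValues_inner T top_ne_bot
      (Submodule.subset_span ⟨j₀, hj₀, rfl⟩) (b.orthonormal.1 j₀) Submodule.mem_top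
  · intro c hc
    obtain ⟨y, hy, hy₁, hcy⟩ := exists_le_norm_apply_of_mem_unitSphereValues_inner T hc
    simpa [hy₁] using hcy.trans (b.norm_apply_le_of_mem_span T hT (norm_nonneg _) hlo hy)
  · rintro r ⟨p, q, hdim, hr, hr_ub⟩
    obtain ⟨y, ⟨hyq, hyhi⟩, hy₀, hTy⟩ := Submodule.exists_mem_inf_ne_zero_apply_mem T
      (p := p) (q := q) (r := Submodule.span ℝ (b '' hi)) (by rw [b.finrank_span_image]; omega)
    have hy₁ : ‖‖y‖⁻¹ • y‖ = 1 := norm_smul_inv_norm hy₀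
    have hθ := b.le_norm_apply_of_mem_span T hT (norm_nonneg _) hhi
      (Submodule.smul_mem _ ‖y‖⁻¹ hyhi)
    rw [hy₁, mul_one] at hθ
    refine hθ.trans (hr_ub (norm_apply_mem_unitSphereValues_inner T
      (ne_bot_of_mem_unitSphereValues hr) (q.smul_mem _ hyq) hy₁ ?_))
    rw [map_smul]
    exact p.smul_mem _ hTy

namespace Matrix

variable {m n : Type*} [Fintype n] [DecidableEq n]

theorem range_toEuclideanLin {𝕜 : Type*} [RCLike 𝕜] (A : Matrix m n 𝕜) :
    LinearMap.range A.toEuclideanLin =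
      Submodule.span 𝕜 (Set.range fun j => WithLp.toLp 2 (Aᵀ j)) := by
  rw [LinearMap.range_eq_map, ← (EuclideanSpace.basisFun n 𝕜).toBasis.span_eq, Submodule.map_span,
    ← Set.range_comp]
  congr 2
  ext j : 1
  simp [toLpLin_apply, col]

variable [Fintype m] [DecidableEq m]

theorem inner_toEuclideanLin_toEuclideanLin (A : Matrix m n ℝ) (x y : EuclideanSpace ℝ n) :
    ⟪A.toEuclideanLin x, A.toEuclideanLin y⟫ = ⟪x, (Aᵀ * A).toEuclideanLin y⟫ := by
  rw [toLpLin_mul (q := 2), LinearMap.comp_apply, ← conjTranspose_eq_transpose_of_trivial,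
    toEuclideanLin_conjTranspose_eq_adjoint, LinearMap.adjoint_inner_right]

noncomputable def toEuclideanIsometry (U : Matrix m n ℝ) (hU : Uᵀ * U = 1) :
    EuclideanSpace ℝ n →ₗᵢ[ℝ] EuclideanSpace ℝ m :=
  U.toEuclideanLin.isometryOfInner fun x y => by
    rw [inner_toEuclideanLin_toEuclideanLin, hU, toLpLin_one, LinearMap.id_apply]

theorem inner_toEuclideanLin_eigenvectorBasis (A : Matrix m n ℝ) (hA : (Aᵀ * A).IsHermitian)
    (j k : n) :
    ⟪A.toEuclideanLin (hA.eigenvectorBasis j), A.toEuclideanLin (hA.eigenvectorBasis k)⟫ =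
      if j = k then hA.eigenvalues k else 0 := by
  rw [inner_toEuclideanLin_toEuclideanLin, toLpLin_apply, hA.mulVec_eigenvectorBasis,
    WithLp.toLp_smul, WithLp.toLp_ofLp, real_inner_smul_right,
    orthonormal_iff_ite.mp hA.eigenvectorBasis.orthonormal]
  split_ifs <;> simp

theorem norm_toEuclideanLin_eigenvectorBasis (A : Matrix m n ℝ) (hA : (Aᵀ * A).IsHermitian)
    (j : n) : ‖A.toEuclideanLin (hA.eigenvectorBasis j)‖ = √(hA.eigenvalues j) := by
  have h := inner_toEuclideanLin_eigenvectorBasis A hA j j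
  rw [if_pos rfl, real_inner_self_eq_norm_sq] at h
  rw [← h, Real.sqrt_sq (norm_nonneg _)]

end Matrix

theorem Matrix.toEuclideanLin_dotProduct_mulVec_toEuclideanLin {m n k l : Type*} [Fintype m]
    [Fintype n] [Fintype k] [DecidableEq k] [Fintype l] [DecidableEq l] (A : Matrix m n ℝ)
    (U : Matrix m k ℝ) (V : Matrix n l ℝ) (x : EuclideanSpace ℝ k) (y : EuclideanSpace ℝ l) :
    U.toEuclideanLin x ⬝ᵥ A *ᵥ V.toEuclideanLin y = ⟪x, (Uᵀ * A * V).toEuclideanLin y⟫ := by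
  rw [EuclideanSpace.inner_eq_star_dotProduct, star_trivial]
  simp only [toLpLin_apply, ← mulVec_mulVec]
  rw [mulVec_transpose, ← dotProduct_mulVec, dotProduct_comm]

theorem singularValue_eq_sqrt_eigenvalues {m n : ℕ} (A : Matrix (Fin m) (Fin n) ℝ)
    (hA : (Aᵀ * A).IsHermitian) {i : ℕ} (hi : i < n) :
    singularValue A i = √(hA.eigenvalues (Tuple.sort hA.eigenvalues (Fin.rev ⟨i, hi⟩))) := by
  rw [singularValue, dif_pos hi]
  rfl

theorem singularValue_isLeast_minimax {s₁ s₂ : ℕ} (H : Matrix (Fin s₁) (Fin s₂) ℝ) {i : ℕ}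
    (hi : i < min s₁ s₂) :
    IsLeast {r | ∃ (p : Submodule ℝ (EuclideanSpace ℝ (Fin s₁)))
        (q : Submodule ℝ (EuclideanSpace ℝ (Fin s₂))), finrank ℝ p + finrank ℝ q = s₁ + s₂ - i ∧
        IsGreatest (unitSphereValues (fun x y => ⟪x, H.toEuclideanLin y⟫) p q) r}
      (singularValue H i) := by
  obtain ⟨hi₁, hi₂⟩ := lt_min_iff.mp hi
  have hH : (Hᵀ * H).IsHermitian := by simpa using isHermitian_conjTranspose_mul_self H
  have : Nonempty (Fin s₁) := ⟨⟨0, by omega⟩⟩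
  set σ := Tuple.sort hH.eigenvalues
  set k : Fin s₂ := Fin.rev ⟨i, hi₂⟩
  have hmono : Monotone fun l => ‖H.toEuclideanLin (hH.eigenvectorBasis (σ l))‖ := by
    intro l l' hll'
    simp only [H.norm_toEuclideanLin_eigenvectorBasis hH]
    exact Real.sqrt_le_sqrt (Tuple.monotone_sort hH.eigenvalues hll')
  have key := hH.eigenvectorBasis.isLeast_minimax_norm_apply H.toEuclideanLin
    (fun j j' hjj' => (inner_toEuclideanLin_eigenvectorBasis H hH j j').trans (if_neg hjj'))
    (lo := (Finset.Iic k).map σ.toEmbedding) (hi := (Finset.Ici k).map σ.toEmbedding)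
    (Finset.mem_map_of_mem _ (Finset.mem_Iic.mpr le_rfl))
    (Finset.forall_mem_map.mpr fun l hl => hmono (Finset.mem_Iic.mp hl))
    (Finset.forall_mem_map.mpr fun l hl => hmono (Finset.mem_Ici.mp hl))
    (by simp [Fin.card_Iic, Fin.card_Ici]; omega)
  have hdim : finrank ℝ (EuclideanSpace ℝ (Fin s₁)) + ((Finset.Iic k).map σ.toEmbedding).card =
      s₁ + s₂ - i := by
    simp [Fin.card_Iic, k]
    omega
  rw [hdim, H.norm_toEuclideanLin_eigenvectorBasis hH] at key
  rwa [singularValue_eq_sqrt_eigenvalues H hH hi₂]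

/-- `i` is 0-based: this is `θ_{i+1}`, and `s₁ + s₂ - i = s - (i + 1) + 1`. -/
theorem ritz_singular_value_minimax {m n s₁ s₂ : ℕ}
    (A : Matrix (Fin m) (Fin n) ℝ)
    (U : Matrix (Fin m) (Fin s₁) ℝ) (V : Matrix (Fin n) (Fin s₂) ℝ)
    (hU : Uᵀ * U = 1) (hV : Vᵀ * V = 1)
    (i : ℕ) (hi : i < min s₁ s₂) :
    IsLeast {r : ℝ |
        ∃ (Su : Submodule ℝ (EuclideanSpace ℝ (Fin m)))
          (Sv : Submodule ℝ (EuclideanSpace ℝ (Fin n))),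
        Su ≤ (Submodule.span ℝ (Set.range (fun j => WithLp.toLp 2 (Uᵀ j))) : Submodule ℝ (EuclideanSpace ℝ (Fin m))) ∧
        Sv ≤ (Submodule.span ℝ (Set.range (fun j => WithLp.toLp 2 (Vᵀ j))) : Submodule ℝ (EuclideanSpace ℝ (Fin n))) ∧
        Module.finrank ℝ Su + Module.finrank ℝ Sv = s₁ + s₂ - i ∧
        IsGreatest {c : ℝ | ∃ u ∈ Su, ∃ v ∈ Sv, ‖u‖ = 1 ∧ ‖v‖ = 1 ∧ c = u ⬝ᵥ A.mulVec v} r}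
      (singularValue (Uᵀ * A * V) i) := by
  have key := singularValue_isLeast_minimax (Uᵀ * A * V) hi
  have hB : (fun x y => ⟪x, (Uᵀ * A * V).toEuclideanLin y⟫) =
      fun x y => U.toEuclideanIsometry hU x ⬝ᵥ A *ᵥ V.toEuclideanIsometry hV y := by
    funext x y
    exact (toEuclideanLin_dotProduct_mulVec_toEuclideanLin A U V x y).symm
  rw [hB, ← setOf_isGreatest_unitSphereValues_le_range_eq (U.toEuclideanIsometry hU)
    (V.toEuclideanIsometry hV) (fun u v => u ⬝ᵥ A *ᵥ v)] at key
  rw [← range_toEuclideanLin, ← range_toEuclideanLin]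
  exact key
end

section
/- (Factorization underlying updating after adding documents.) Let U_k ∈ ℝ^{m×k} and V_k ∈ ℝ^{n×k} have orthonormal columns, let Σ_k ∈ ℝ^{k×k}, set A_k = U_k Σ_k V_kᵀ, and let D ∈ ℝ^{m×p}. Suppose (I − U_k U_kᵀ) D = Û_p R, where Û_p ∈ ℝ^{m×p} has orthonormal columns and R ∈ ℝ^{p×p}. Then the m-by-(n+p) matrix A_D = [A_k, D] satisfies A_D = [U_k, Û_p] · H_D · [[V_k, 0],[0, I_p]]ᵀ, where H_D = [[Σ_k, U_kᵀ D],[0, R]] ∈ ℝ^{(k+p)×(k+p)}. -/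
open Matrix

theorem fromCols_mul_fromBlocks_zero_mul_fromBlocks_transpose {R m n k p q : Type*} [Ring R]
    [Fintype k] [Fintype p] [Fintype q] [DecidableEq q]
    (A : Matrix m k R) (B : Matrix m p R) (S : Matrix k k R) (C : Matrix k q R)
    (T : Matrix p q R) (V : Matrix n k R) :
    fromCols A B * fromBlocks S C 0 T * (fromBlocks V 0 0 (1 : Matrix q q R))ᵀ =
      fromCols (A * S * Vᵀ) (A * C + B * T) := by
  simp only [fromBlocks_transpose, transpose_zero, transpose_one, fromCols_mul_fromBlocks,
    Matrix.mul_zero, Matrix.mul_one, add_zero, zero_add]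

theorem mul_transpose_mul_add_eq_of_sub_mul_eq {R m k p q : Type*} [Ring R]
    [Fintype m] [DecidableEq m] [Fintype k] [Fintype p]
    {U : Matrix m k R} {D : Matrix m q R} {W : Matrix m p R} {T : Matrix p q R}
    (h : (1 - U * Uᵀ) * D = W * T) :
    U * (Uᵀ * D) + W * T = D := by
  rw [← h, Matrix.sub_mul, Matrix.one_mul, ← Matrix.mul_assoc, add_sub_cancel]

theorem zha_simon_document_factorization_general {m n k p : ℕ}
    (Uk : Matrix (Fin m) (Fin k) ℝ) (Vk : Matrix (Fin n) (Fin k) ℝ)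
    (Sk : Matrix (Fin k) (Fin k) ℝ) (D : Matrix (Fin m) (Fin p) ℝ)
    (Uhat : Matrix (Fin m) (Fin p) ℝ) (R : Matrix (Fin p) (Fin p) ℝ)
    (hQR : (1 - Uk * Ukᵀ) * D = Uhat * R) :
    Matrix.fromCols (Uk * Sk * Vkᵀ) D =
      Matrix.fromCols Uk Uhat *
        Matrix.fromBlocks Sk (Ukᵀ * D) 0 R *
        (Matrix.fromBlocks Vk 0 0 (1 : Matrix (Fin p) (Fin p) ℝ))ᵀ := by
  rw [fromCols_mul_fromBlocks_zero_mul_fromBlocks_transpose,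
    mul_transpose_mul_add_eq_of_sub_mul_eq hQR]

/-- Factorization underlying the Zha–Simon update after adding documents:
if `(I − U_k U_kᵀ) D = Û_p R` with `U_k`, `V_k`, `Û_p` having orthonormal columns, then
`A_D = [A_k, D] = [U_k, Û_p] · H_D · [[V_k, 0],[0, I_p]]ᵀ`, where `A_k = U_k Σ_k V_kᵀ`
and `H_D = [[Σ_k, U_kᵀ D],[0, R]]`. -/
theorem zha_simon_document_factorization {m n k p : ℕ}
    (Uk : Matrix (Fin m) (Fin k) ℝ) (Vk : Matrix (Fin n) (Fin k) ℝ)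
    (Sk : Matrix (Fin k) (Fin k) ℝ) (D : Matrix (Fin m) (Fin p) ℝ)
    (Uhat : Matrix (Fin m) (Fin p) ℝ) (R : Matrix (Fin p) (Fin p) ℝ)
    (hUk : Ukᵀ * Uk = 1) (hVk : Vkᵀ * Vk = 1) (hUhat : Uhatᵀ * Uhat = 1)
    (hQR : (1 - Uk * Ukᵀ) * D = Uhat * R) :
    Matrix.fromCols (Uk * Sk * Vkᵀ) D =
      Matrix.fromCols Uk Uhat *
        Matrix.fromBlocks Sk (Ukᵀ * D) 0 R *
        (Matrix.fromBlocks Vk 0 0 (1 : Matrix (Fin p) (Fin p) ℝ))ᵀ :=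
  zha_simon_document_factorization_general Uk Vk Sk D Uhat R hQR
end

section
/- (Exactness of the Zha–Simon document-update scheme.) Let U_k ∈ ℝ^{m×k} and V_k ∈ ℝ^{n×k} have orthonormal columns, Σ_k ∈ ℝ^{k×k}, A_k = U_k Σ_k V_kᵀ, D ∈ ℝ^{m×p}. Suppose (I − U_k U_kᵀ) D = Û_p R with Û_p ∈ ℝ^{m×p} having orthonormal columns and satisfying Û_pᵀ U_k = 0, and R ∈ ℝ^{p×p}. Let H_D = [[Σ_k, U_kᵀ D],[0, R]]. If (θ, f, g) satisfies H_D g = θ f and H_Dᵀ f = θ g with f ∈ ℝ^{k+p}, g ∈ ℝ^{k+p}, then the vectors u = [U_k, Û_p] f and v = [[V_k, 0],[0, I_p]] g satisfy A_D v = θ u and A_Dᵀ u = θ v, where A_D = [A_k, D]; moreover ‖u‖ = ‖f‖ and ‖v‖ = ‖g‖. Consequently every singular triplet of H_D lifts to a singular triplet of A_D with the same singular value. -/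
/-!
Both lifting maps have orthonormal columns, `W = [U_k, Û_p]` and `Z = diag(V_k, I_p)`, so they
preserve Euclidean norms. The QR relation `D = U_k (U_kᵀ D) + Û_p R` makes them intertwine the two
matrices, `A_D Z = W H_D` and `A_Dᵀ W = Z H_Dᵀ`, and intertwining carries each of the equations
`H_D g = θ f`, `H_Dᵀ f = θ g` over to `A_D`.
-/

open Matrix

lemma norm_eq_of_ofLp_eq_mulVec {ι κ : Type*} [Fintype ι] [Fintype κ] [DecidableEq κ]
    {W : Matrix ι κ ℝ} (hW : Wᵀ * W = 1) {x : EuclideanSpace ℝ κ} {y : EuclideanSpace ℝ ι}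
    (hy : y.ofLp = W *ᵥ x.ofLp) : ‖y‖ = ‖x‖ := by
  rw [← sq_eq_sq₀ (norm_nonneg y) (norm_nonneg x), ← real_inner_self_eq_norm_sq,
    ← real_inner_self_eq_norm_sq, EuclideanSpace.inner_eq_star_dotProduct,
    EuclideanSpace.inner_eq_star_dotProduct, hy, star_trivial, star_trivial,
    dotProduct_mulVec, ← mulVec_transpose, mulVec_mulVec, hW, one_mulVec]

lemma mulVec_mulVec_eq_smul_of_mul_eq {ι κ μ ν : Type*} [Fintype κ] [Fintype μ] [Fintype ν]
    {A : Matrix ι κ ℝ} {Z : Matrix κ ν ℝ} {W : Matrix ι μ ℝ} {H : Matrix μ ν ℝ}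
    (hAZ : A * Z = W * H) {θ : ℝ} {f : μ → ℝ} {g : ν → ℝ} (h : H *ᵥ g = θ • f) :
    A *ᵥ (Z *ᵥ g) = θ • (W *ᵥ f) := by
  rw [mulVec_mulVec, hAZ, ← mulVec_mulVec, h, mulVec_smul]

lemma fromCols_transpose_mul_self_eq_one {m k p : Type*} [Fintype m] [DecidableEq k]
    [DecidableEq p] {U : Matrix m k ℝ} {Û : Matrix m p ℝ}
    (hU : Uᵀ * U = 1) (hÛ : Ûᵀ * Û = 1) (hperp : Ûᵀ * U = 0) :
    (fromCols U Û)ᵀ * fromCols U Û = 1 := by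
  have hperp' : Uᵀ * Û = 0 := by simpa using congrArg transpose hperp
  rw [transpose_fromCols, fromRows_mul_fromCols, hU, hÛ, hperp, hperp', fromBlocks_one]

lemma fromBlocks_transpose_mul_self_eq_one {n k p : Type*} [Fintype n] [Fintype p]
    [DecidableEq k] [DecidableEq p] {V : Matrix n k ℝ} (hV : Vᵀ * V = 1) :
    (fromBlocks V 0 0 (1 : Matrix p p ℝ))ᵀ * fromBlocks V 0 0 (1 : Matrix p p ℝ) = 1 := by
  simp [fromBlocks_transpose, fromBlocks_multiply, hV, fromBlocks_one]

section QR

variable {l m k p : Type*} [Fintype m] [Fintype k] [Fintype p] [DecidableEq m]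
  {U : Matrix m k ℝ} {Û : Matrix m p ℝ} {D : Matrix m l ℝ} {R : Matrix p l ℝ}

lemma eq_mul_add_mul_of_sub_mul_eq (hQR : (1 - U * Uᵀ) * D = Û * R) :
    D = U * (Uᵀ * D) + Û * R := by
  rw [← hQR, Matrix.sub_mul, Matrix.one_mul, Matrix.mul_assoc, add_sub_cancel]

lemma transpose_mul_eq_of_sub_mul_eq [DecidableEq p] (hÛ : Ûᵀ * Û = 1) (hperp : Ûᵀ * U = 0)
    (hQR : (1 - U * Uᵀ) * D = Û * R) : Ûᵀ * D = R := by
  rw [eq_mul_add_mul_of_sub_mul_eq hQR, Matrix.mul_add, ← Matrix.mul_assoc Ûᵀ U,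
    ← Matrix.mul_assoc Ûᵀ Û, hperp, hÛ, Matrix.zero_mul, zero_add, Matrix.one_mul]

end QR

section Intertwining

variable {m n k p : Type*} [Fintype m] [Fintype k] [Fintype p] [DecidableEq m] [DecidableEq k]
  [DecidableEq p] {U : Matrix m k ℝ} {Û : Matrix m p ℝ} {V : Matrix n k ℝ} {S : Matrix k k ℝ}
  {D : Matrix m p ℝ} {R : Matrix p p ℝ}

lemma fromCols_mul_fromBlocks_eq_fromCols_mul_fromBlocks [Fintype n] (hV : Vᵀ * V = 1)
    (hQR : (1 - U * Uᵀ) * D = Û * R) :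
    fromCols (U * S * Vᵀ) D * fromBlocks V 0 0 (1 : Matrix p p ℝ) =
      fromCols U Û * fromBlocks S (Uᵀ * D) 0 R := by
  rw [fromCols_mul_fromBlocks, fromCols_mul_fromBlocks, ← eq_mul_add_mul_of_sub_mul_eq hQR]
  simp [Matrix.mul_assoc, hV]

lemma fromCols_transpose_mul_fromCols_eq_fromBlocks_mul_transpose (hU : Uᵀ * U = 1)
    (hÛ : Ûᵀ * Û = 1) (hperp : Ûᵀ * U = 0) (hQR : (1 - U * Uᵀ) * D = Û * R) :
    (fromCols (U * S * Vᵀ) D)ᵀ * fromCols U Û =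
      fromBlocks V 0 0 (1 : Matrix p p ℝ) * (fromBlocks S (Uᵀ * D) 0 R)ᵀ := by
  have hperp' : Uᵀ * Û = 0 := by simpa using congrArg transpose hperp
  have hR : Dᵀ * Û = Rᵀ := by
    rw [← transpose_mul_eq_of_sub_mul_eq hÛ hperp hQR, transpose_mul, transpose_transpose]
  rw [transpose_fromCols, fromBlocks_transpose, fromRows_mul_fromCols, fromBlocks_multiply]
  simp [transpose_mul, Matrix.mul_assoc, hU, hperp', hR]

end Intertwining

/-- Exactness of the Zha–Simon document-update scheme: every singular triplet
`(θ, f, g)` of `H_D = [[Σ_k, U_kᵀ D],[0, R]]` lifts to a singular triplet of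
`A_D = [A_k, D]` with the same singular value, via `u = [U_k, Û_p] f` and
`v = [[V_k, 0],[0, I_p]] g`; moreover `‖u‖ = ‖f‖` and `‖v‖ = ‖g‖`. -/
theorem zha_simon_document_exactness {m n k p : ℕ}
    (Uk : Matrix (Fin m) (Fin k) ℝ) (Vk : Matrix (Fin n) (Fin k) ℝ)
    (Sk : Matrix (Fin k) (Fin k) ℝ) (D : Matrix (Fin m) (Fin p) ℝ)
    (Uhat : Matrix (Fin m) (Fin p) ℝ) (R : Matrix (Fin p) (Fin p) ℝ)
    (hUk : Ukᵀ * Uk = 1) (hVk : Vkᵀ * Vk = 1) (hUhat : Uhatᵀ * Uhat = 1)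
    (hperp : Uhatᵀ * Uk = 0)
    (hQR : (1 - Uk * Ukᵀ) * D = Uhat * R)
    (AD : Matrix (Fin m) (Fin n ⊕ Fin p) ℝ)
    (hAD : AD = Matrix.fromCols (Uk * Sk * Vkᵀ) D)
    (HD : Matrix (Fin k ⊕ Fin p) (Fin k ⊕ Fin p) ℝ)
    (hHD : HD = Matrix.fromBlocks Sk (Ukᵀ * D) 0 R)
    (θ : ℝ) (f g : EuclideanSpace ℝ (Fin k ⊕ Fin p))
    (h1 : HD.mulVec g = θ • f) (h2 : HDᵀ.mulVec f = θ • g)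
    (u : EuclideanSpace ℝ (Fin m)) (v : EuclideanSpace ℝ (Fin n ⊕ Fin p))
    (hu : u = (Matrix.fromCols Uk Uhat).mulVec f)
    (hv : v = (Matrix.fromBlocks Vk 0 0 (1 : Matrix (Fin p) (Fin p) ℝ)).mulVec g) :
    AD.mulVec v = θ • u ∧ ADᵀ.mulVec u = θ • v ∧ ‖u‖ = ‖f‖ ∧ ‖v‖ = ‖g‖ := by
  subst hAD hHD
  rw [hu, hv]
  exact ⟨mulVec_mulVec_eq_smul_of_mul_eq
      (fromCols_mul_fromBlocks_eq_fromCols_mul_fromBlocks hVk hQR) h1,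
    mulVec_mulVec_eq_smul_of_mul_eq
      (fromCols_transpose_mul_fromCols_eq_fromBlocks_mul_transpose hUk hUhat hperp hQR) h2,
    norm_eq_of_ofLp_eq_mulVec (fromCols_transpose_mul_self_eq_one hUk hUhat hperp) hu,
    norm_eq_of_ofLp_eq_mulVec (fromBlocks_transpose_mul_self_eq_one hVk) hv⟩
end

section
/- (Factorization underlying updating after adding terms.) Let U_k ∈ ℝ^{m×k} and V_k ∈ ℝ^{n×k} have orthonormal columns, Σ_k ∈ ℝ^{k×k}, A_k = U_k Σ_k V_kᵀ, and T ∈ ℝ^{p×n}. Suppose (I − V_k V_kᵀ) Tᵀ = V̂_p Lᵀ, where V̂_p ∈ ℝ^{n×p} has orthonormal columns and L ∈ ℝ^{p×p}. Then the (m+p)-by-n matrix A_T = [[A_k],[T]] (A_k stacked above T) satisfies A_T = [[U_k, 0],[0, I_p]] · H_T · [V_k, V̂_p]ᵀ, where H_T = [[Σ_k, 0],[T V_k, L]] ∈ ℝ^{(k+p)×(k+p)}. -/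
open Matrix

variable {R : Type*} [CommRing R] {m n k l p q : Type*}
  [Fintype n] [Fintype l] [Fintype q]

theorem Matrix.eq_mul_mul_transpose_add_of_sub_mul_transpose_eq [DecidableEq n]
    {V : Matrix n l R} {T : Matrix p n R} {W : Matrix n q R} {L : Matrix p q R}
    (h : (1 - V * Vᵀ) * Tᵀ = W * Lᵀ) : T = T * V * Vᵀ + L * Wᵀ := by
  have h' := congrArg transpose h
  rw [transpose_mul, transpose_sub, transpose_one, Matrix.mul_sub, Matrix.mul_one,
    transpose_mul, transpose_transpose, transpose_mul, sub_eq_iff_eq_add'] at h'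
  rwa [Matrix.mul_assoc]

theorem Matrix.fromBlocks_mul_fromBlocks_mul_transpose_fromCols
    [Fintype k] [Fintype p] [DecidableEq p]
    (U : Matrix m k R) (S : Matrix k l R) (V : Matrix n l R) (T : Matrix p n R)
    (W : Matrix n q R) (L : Matrix p q R) :
    fromBlocks U 0 0 (1 : Matrix p p R) * fromBlocks S 0 (T * V) L * (fromCols V W)ᵀ =
      fromRows (U * S * Vᵀ) (T * V * Vᵀ + L * Wᵀ) := by
  rw [transpose_fromCols, fromBlocks_multiply, fromBlocks_mul_fromRows]
  simp [Matrix.mul_assoc]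

theorem zha_simon_term_factorization_general {m n k p : ℕ}
    (Uk : Matrix (Fin m) (Fin k) ℝ) (Vk : Matrix (Fin n) (Fin k) ℝ)
    (Sk : Matrix (Fin k) (Fin k) ℝ) (T : Matrix (Fin p) (Fin n) ℝ)
    (Vhat : Matrix (Fin n) (Fin p) ℝ) (L : Matrix (Fin p) (Fin p) ℝ)
    (hQR : (1 - Vk * Vkᵀ) * Tᵀ = Vhat * Lᵀ) :
    Matrix.fromRows (Uk * Sk * Vkᵀ) T =
      Matrix.fromBlocks Uk 0 0 (1 : Matrix (Fin p) (Fin p) ℝ) *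
        Matrix.fromBlocks Sk 0 (T * Vk) L *
        (Matrix.fromCols Vk Vhat)ᵀ := by
  rw [fromBlocks_mul_fromBlocks_mul_transpose_fromCols,
    ← eq_mul_mul_transpose_add_of_sub_mul_transpose_eq hQR]

/-- Factorization underlying the Zha–Simon update after adding terms:
if `(I − V_k V_kᵀ) Tᵀ = V̂_p Lᵀ` with `U_k`, `V_k`, `V̂_p` having orthonormal columns,
then `A_T = [[A_k],[T]] = [[U_k, 0],[0, I_p]] · H_T · [V_k, V̂_p]ᵀ`, where
`A_k = U_k Σ_k V_kᵀ` and `H_T = [[Σ_k, 0],[T V_k, L]]`. -/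
theorem zha_simon_term_factorization {m n k p : ℕ}
    (Uk : Matrix (Fin m) (Fin k) ℝ) (Vk : Matrix (Fin n) (Fin k) ℝ)
    (Sk : Matrix (Fin k) (Fin k) ℝ) (T : Matrix (Fin p) (Fin n) ℝ)
    (Vhat : Matrix (Fin n) (Fin p) ℝ) (L : Matrix (Fin p) (Fin p) ℝ)
    (hUk : Ukᵀ * Uk = 1) (hVk : Vkᵀ * Vk = 1) (hVhat : Vhatᵀ * Vhat = 1)
    (hQR : (1 - Vk * Vkᵀ) * Tᵀ = Vhat * Lᵀ) :
    Matrix.fromRows (Uk * Sk * Vkᵀ) T =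
      Matrix.fromBlocks Uk 0 0 (1 : Matrix (Fin p) (Fin p) ℝ) *
        Matrix.fromBlocks Sk 0 (T * Vk) L *
        (Matrix.fromCols Vk Vhat)ᵀ :=
  zha_simon_term_factorization_general Uk Vk Sk T Vhat L hQR
end

section
/- (Factorization underlying updating after correcting term weights.) Let U_k ∈ ℝ^{m×k} and V_k ∈ ℝ^{n×k} have orthonormal columns, Σ_k ∈ ℝ^{k×k}, A_k = U_k Σ_k V_kᵀ, C ∈ ℝ^{m×p}, W ∈ ℝ^{p×n}. Suppose (I − U_k U_kᵀ) C = Û_p R and (I − V_k V_kᵀ) Wᵀ = V̂_p Lᵀ, where Û_p ∈ ℝ^{m×p} and V̂_p ∈ ℝ^{n×p} have orthonormal columns and R, L ∈ ℝ^{p×p}. Then A_CW = A_k + C W satisfies A_CW = [U_k, Û_p] · H_CW · [V_k, V̂_p]ᵀ, where H_CW = [[Σ_k, 0],[0, 0]] + [[U_kᵀ C],[R]] · [W V_k, L] ∈ ℝ^{(k+p)×(k+p)}. -/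
/-!
Multiplying out the blocks, `[U_k, Û_p] [[U_kᵀ C],[R]] = U_k U_kᵀ C + Û_p R`, which by the first
QR relation is `U_k U_kᵀ C + (I − U_k U_kᵀ) C = C`. Dually `[W V_k, L] [V_k, V̂_p]ᵀ = W`, and
the `Σ_k` block contributes `U_k Σ_k V_kᵀ`.
-/

open Matrix

namespace Matrix

variable {α : Type*} {m n k p : Type*} [Fintype k] [Fintype p]

theorem fromCols_mul_fromBlocks_zero_mul_fromRows [Semiring α]
    (A : Matrix m k α) (A' : Matrix m p α) (S : Matrix k k α)
    (B : Matrix k n α) (B' : Matrix p n α) :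
    fromCols A A' * (fromBlocks S 0 0 0 : Matrix (k ⊕ p) (k ⊕ p) α) * fromRows B B' =
      A * S * B := by
  simp [fromCols_mul_fromBlocks, fromCols_mul_fromRows]

variable [Fintype m] [DecidableEq m]

theorem fromCols_mul_fromRows_mul_of_sub_mul_eq [Ring α]
    {U : Matrix m k α} {P : Matrix k m α} {Uhat : Matrix m p α} {C : Matrix m n α}
    {R : Matrix p n α} (h : (1 - U * P) * C = Uhat * R) :
    fromCols U Uhat * fromRows (P * C) R = C := by
  rw [fromCols_mul_fromRows, ← h, Matrix.sub_mul, Matrix.one_mul, Matrix.mul_assoc,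
    add_sub_cancel]

theorem fromCols_mul_transpose_fromCols_of_sub_mul_transpose_eq [CommRing α]
    {V : Matrix m k α} {Vhat : Matrix m p α} {W : Matrix n m α} {L : Matrix n p α}
    (h : (1 - V * Vᵀ) * Wᵀ = Vhat * Lᵀ) :
    fromCols (W * V) L * (fromCols V Vhat)ᵀ = W := by
  have := congrArg transpose (fromCols_mul_fromRows_mul_of_sub_mul_eq h)
  simpa only [transpose_mul, transpose_fromCols, transpose_fromRows,
    transpose_transpose] using this

end Matrix

theorem zha_simon_weight_factorization_general {m n k p : ℕ}
    (Uk : Matrix (Fin m) (Fin k) ℝ) (Vk : Matrix (Fin n) (Fin k) ℝ)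
    (Sk : Matrix (Fin k) (Fin k) ℝ)
    (C : Matrix (Fin m) (Fin p) ℝ) (W : Matrix (Fin p) (Fin n) ℝ)
    (Uhat : Matrix (Fin m) (Fin p) ℝ) (R : Matrix (Fin p) (Fin p) ℝ)
    (Vhat : Matrix (Fin n) (Fin p) ℝ) (L : Matrix (Fin p) (Fin p) ℝ)
    (hQR1 : (1 - Uk * Ukᵀ) * C = Uhat * R)
    (hQR2 : (1 - Vk * Vkᵀ) * Wᵀ = Vhat * Lᵀ) :
    Uk * Sk * Vkᵀ + C * W =
      Matrix.fromCols Uk Uhat *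
        (Matrix.fromBlocks Sk 0 0 0 +
          Matrix.fromRows (Ukᵀ * C) R * Matrix.fromCols (W * Vk) L) *
        (Matrix.fromCols Vk Vhat)ᵀ := by
  rw [Matrix.mul_add, Matrix.add_mul, transpose_fromCols,
    fromCols_mul_fromBlocks_zero_mul_fromRows, ← transpose_fromCols, ← Matrix.mul_assoc,
    Matrix.mul_assoc _ _ (fromCols Vk Vhat)ᵀ,
    fromCols_mul_fromRows_mul_of_sub_mul_eq hQR1,
    fromCols_mul_transpose_fromCols_of_sub_mul_transpose_eq hQR2]

/-- Factorization underlying the Zha–Simon update after correcting term weights: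
if `(I − U_k U_kᵀ) C = Û_p R` and `(I − V_k V_kᵀ) Wᵀ = V̂_p Lᵀ` (all of `U_k`, `V_k`,
`Û_p`, `V̂_p` with orthonormal columns), then `A_CW = A_k + C W` satisfies
`A_CW = [U_k, Û_p] · H_CW · [V_k, V̂_p]ᵀ`, where `A_k = U_k Σ_k V_kᵀ` and
`H_CW = [[Σ_k, 0],[0, 0]] + [[U_kᵀ C],[R]] · [W V_k, L]`. -/
theorem zha_simon_weight_factorization {m n k p : ℕ}
    (Uk : Matrix (Fin m) (Fin k) ℝ) (Vk : Matrix (Fin n) (Fin k) ℝ)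
    (Sk : Matrix (Fin k) (Fin k) ℝ)
    (C : Matrix (Fin m) (Fin p) ℝ) (W : Matrix (Fin p) (Fin n) ℝ)
    (Uhat : Matrix (Fin m) (Fin p) ℝ) (R : Matrix (Fin p) (Fin p) ℝ)
    (Vhat : Matrix (Fin n) (Fin p) ℝ) (L : Matrix (Fin p) (Fin p) ℝ)
    (hUk : Ukᵀ * Uk = 1) (hVk : Vkᵀ * Vk = 1)
    (hUhat : Uhatᵀ * Uhat = 1) (hVhat : Vhatᵀ * Vhat = 1)
    (hQR1 : (1 - Uk * Ukᵀ) * C = Uhat * R)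
    (hQR2 : (1 - Vk * Vkᵀ) * Wᵀ = Vhat * Lᵀ) :
    Uk * Sk * Vkᵀ + C * W =
      Matrix.fromCols Uk Uhat *
        (Matrix.fromBlocks Sk 0 0 0 +
          Matrix.fromRows (Ukᵀ * C) R * Matrix.fromCols (W * Vk) L) *
        (Matrix.fromCols Vk Vhat)ᵀ :=
  zha_simon_weight_factorization_general Uk Vk Sk C W Uhat R Vhat L hQR1 hQR2
end

section
/- (Proposition: projected matrix with reduced right subspace, adding terms.) Let U_k ∈ ℝ^{m×k} and V_k ∈ ℝ^{n×k} have orthonormal columns, Σ_k ∈ ℝ^{k×k}, A_k = U_k Σ_k V_kᵀ, T ∈ ℝ^{p×n}. Let Z_l ∈ ℝ^{n×l} have orthonormal columns with Z_lᵀ V_k = 0. Set U = [[U_k, 0],[0, I_p]] ∈ ℝ^{(m+p)×(k+p)}, V̄ = [V_k, Z_l] ∈ ℝ^{n×(k+l)}, and A_T = [[A_k],[T]] (A_k stacked above T). Then the projected matrix H = Uᵀ A_T V̄ ∈ ℝ^{(k+p)×(k+l)} equals H = [[Σ_k, 0],[T V_k, T (I − V_k V_kᵀ) Z_l]]. -/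
open Matrix

namespace Matrix

variable {R : Type*} {m n k p q r : Type*} [Fintype n] [Fintype m]

lemma fromBlocks_transpose_mul_fromRows_mul_fromCols [CommSemiring R] [Fintype p]
    [DecidableEq p] (U : Matrix m k R) (A : Matrix m n R) (T : Matrix p n R) (V : Matrix n q R)
    (Z : Matrix n r R) :
    (fromBlocks U 0 0 (1 : Matrix p p R))ᵀ * fromRows A T * fromCols V Z =
      fromBlocks (Uᵀ * A * V) (Uᵀ * A * Z) (T * V) (T * Z) := by
  rw [fromBlocks_transpose, fromBlocks_mul_fromRows, fromRows_mul_fromCols]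
  simp only [transpose_zero, transpose_one, Matrix.zero_mul, Matrix.one_mul, add_zero, zero_add]

lemma transpose_mul_mul_mul_transpose_mul [CommSemiring R] [Fintype k] [DecidableEq k]
    {U : Matrix m k R} (hU : Uᵀ * U = 1) (S : Matrix k k R) (V : Matrix n k R) (W : Matrix n q R) :
    Uᵀ * (U * S * Vᵀ) * W = S * (Vᵀ * W) := by
  simp only [Matrix.mul_assoc]
  rw [← Matrix.mul_assoc Uᵀ, hU, Matrix.one_mul]

lemma one_sub_mul_transpose_mul_of_transpose_mul_eq_zero [Ring R] [Fintype k] [DecidableEq n]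
    {V : Matrix n k R} {Z : Matrix n q R} (h : Vᵀ * Z = 0) :
    (1 - V * Vᵀ) * Z = Z := by
  rw [Matrix.sub_mul, Matrix.one_mul, Matrix.mul_assoc, h, Matrix.mul_zero, sub_zero]

end Matrix

theorem projected_matrix_reduced_terms_general {m n k p l : ℕ}
    (Uk : Matrix (Fin m) (Fin k) ℝ) (Vk : Matrix (Fin n) (Fin k) ℝ)
    (Sk : Matrix (Fin k) (Fin k) ℝ) (T : Matrix (Fin p) (Fin n) ℝ)
    (Zl : Matrix (Fin n) (Fin l) ℝ)
    (hUk : Ukᵀ * Uk = 1) (hVk : Vkᵀ * Vk = 1)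
    (hperp : Zlᵀ * Vk = 0) :
    (Matrix.fromBlocks Uk 0 0 (1 : Matrix (Fin p) (Fin p) ℝ))ᵀ *
        Matrix.fromRows (Uk * Sk * Vkᵀ) T *
        Matrix.fromCols Vk Zl =
      Matrix.fromBlocks Sk 0 (T * Vk) (T * ((1 - Vk * Vkᵀ) * Zl)) := by
  have hVZ : Vkᵀ * Zl = 0 := by simpa using congrArg transpose hperp
  rw [fromBlocks_transpose_mul_fromRows_mul_fromCols, transpose_mul_mul_mul_transpose_mul hUk,
    transpose_mul_mul_mul_transpose_mul hUk, hVk, hVZ, Matrix.mul_one, Matrix.mul_zero,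
    one_sub_mul_transpose_mul_of_transpose_mul_eq_zero hVZ]

/-- Projected matrix of SV-RR with a reduced right subspace (adding terms):
if `Z_l` has orthonormal columns with `Z_lᵀ V_k = 0`, then for `U = [[U_k, 0],[0, I_p]]`,
`A_T = [[A_k],[T]]` (with `A_k = U_k Σ_k V_kᵀ`) and `V̄ = [V_k, Z_l]`, the projected
matrix `H = Uᵀ A_T V̄` equals `[[Σ_k, 0],[T V_k, T (I − V_k V_kᵀ) Z_l]]`. -/
theorem projected_matrix_reduced_terms {m n k p l : ℕ}
    (Uk : Matrix (Fin m) (Fin k) ℝ) (Vk : Matrix (Fin n) (Fin k) ℝ)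
    (Sk : Matrix (Fin k) (Fin k) ℝ) (T : Matrix (Fin p) (Fin n) ℝ)
    (Zl : Matrix (Fin n) (Fin l) ℝ)
    (hUk : Ukᵀ * Uk = 1) (hVk : Vkᵀ * Vk = 1)
    (hZl : Zlᵀ * Zl = 1) (hperp : Zlᵀ * Vk = 0) :
    (Matrix.fromBlocks Uk 0 0 (1 : Matrix (Fin p) (Fin p) ℝ))ᵀ *
        Matrix.fromRows (Uk * Sk * Vkᵀ) T *
        Matrix.fromCols Vk Zl =
      Matrix.fromBlocks Sk 0 (T * Vk) (T * ((1 - Vk * Vkᵀ) * Zl)) :=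
  projected_matrix_reduced_terms_general Uk Vk Sk T Zl hUk hVk hperp
end

section
/- (Proposition: projected matrix with reduced subspaces, correcting weights.) Let U_k ∈ ℝ^{m×k} and V_k ∈ ℝ^{n×k} have orthonormal columns, Σ_k ∈ ℝ^{k×k}, A_k = U_k Σ_k V_kᵀ, C ∈ ℝ^{m×p}, W ∈ ℝ^{p×n}. Let Z¹ ∈ ℝ^{m×l₁} and Z² ∈ ℝ^{n×l₂} have orthonormal columns with (Z¹)ᵀ U_k = 0 and (Z²)ᵀ V_k = 0. Set Ū = [U_k, Z¹], V̄ = [V_k, Z²], and A_CW = A_k + C W. Then the projected matrix H = Ūᵀ A_CW V̄ ∈ ℝ^{(k+l₁)×(k+l₂)} equals H = [[Σ_k, 0],[0, 0]] + [[U_kᵀ C],[(Z¹)ᵀ (I − U_k U_kᵀ) C]] · [W V_k, W (I − V_k V_kᵀ) Z²]. -/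
open Matrix

/-!
Blockwise, `H` has entries `Xᵀ A_k Y + (Xᵀ C)(W Y)` with `X ∈ {U_k, Z¹}`, `Y ∈ {V_k, Z²}`.
Orthonormality of `U_k`, `V_k` and the orthogonality `(Z¹)ᵀ U_k = 0`, `(Z²)ᵀ V_k = 0` reduce the
`A_k` part to `[[Σ_k, 0], [0, 0]]`, and the same orthogonality lets the projectors `I − U_k U_kᵀ`,
`I − V_k V_kᵀ` be dropped from the `C W` part.
-/

namespace Matrix

variable {R : Type*} {m n k l p q : Type*} [Fintype m] [Fintype n]

theorem transpose_fromCols_mul_mul_fromCols [Semiring R]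
    (X₁ : Matrix m k R) (X₂ : Matrix m l R) (M : Matrix m n R)
    (Y₁ : Matrix n p R) (Y₂ : Matrix n q R) :
    (fromCols X₁ X₂)ᵀ * M * fromCols Y₁ Y₂ =
      fromBlocks (X₁ᵀ * M * Y₁) (X₁ᵀ * M * Y₂) (X₂ᵀ * M * Y₁) (X₂ᵀ * M * Y₂) := by
  rw [transpose_fromCols, fromRows_mul, fromRows_mul_fromCols]

theorem transpose_mul_lowRank_add_mul [Semiring R] [Fintype k] [Fintype l]
    (X : Matrix m p R) (U : Matrix m k R) (S : Matrix k k R) (V : Matrix n k R)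
    (C : Matrix m l R) (W : Matrix l n R) (Y : Matrix n q R) :
    Xᵀ * (U * S * Vᵀ + C * W) * Y = Xᵀ * U * S * (Vᵀ * Y) + Xᵀ * C * (W * Y) := by
  simp only [Matrix.mul_add, Matrix.add_mul, Matrix.mul_assoc]

variable [Fintype k] [DecidableEq m]

theorem transpose_mul_one_sub_mul_transpose_mul_of_transpose_mul_eq_zero [Ring R]
    {U : Matrix m k R} {Z : Matrix m p R} (hZU : Zᵀ * U = 0) (C : Matrix m q R) :
    Zᵀ * ((1 - U * Uᵀ) * C) = Zᵀ * C := by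
  rw [Matrix.sub_mul, Matrix.one_mul, Matrix.mul_sub, ← Matrix.mul_assoc, ← Matrix.mul_assoc,
    hZU, Matrix.zero_mul, Matrix.zero_mul, sub_zero]

theorem mul_one_sub_mul_transpose_mul_of_transpose_mul_eq_zero [CommRing R]
    {V : Matrix m k R} {Z : Matrix m p R} (hZV : Zᵀ * V = 0) (W : Matrix q m R) :
    W * ((1 - V * Vᵀ) * Z) = W * Z := by
  have hVZ : Vᵀ * Z = 0 := by simpa using congrArg transpose hZV
  rw [Matrix.sub_mul, Matrix.one_mul, Matrix.mul_assoc, hVZ, Matrix.mul_zero, sub_zero]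

end Matrix

theorem projected_matrix_reduced_weights_general {m n k p l₁ l₂ : ℕ}
    (Uk : Matrix (Fin m) (Fin k) ℝ) (Vk : Matrix (Fin n) (Fin k) ℝ)
    (Sk : Matrix (Fin k) (Fin k) ℝ)
    (C : Matrix (Fin m) (Fin p) ℝ) (W : Matrix (Fin p) (Fin n) ℝ)
    (Z1 : Matrix (Fin m) (Fin l₁) ℝ) (Z2 : Matrix (Fin n) (Fin l₂) ℝ)
    (hUk : Ukᵀ * Uk = 1) (hVk : Vkᵀ * Vk = 1)
    (hperp1 : Z1ᵀ * Uk = 0) (hperp2 : Z2ᵀ * Vk = 0) :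
    (Matrix.fromCols Uk Z1)ᵀ * (Uk * Sk * Vkᵀ + C * W) * Matrix.fromCols Vk Z2 =
      Matrix.fromBlocks Sk 0 0 0 +
        Matrix.fromRows (Ukᵀ * C) (Z1ᵀ * ((1 - Uk * Ukᵀ) * C)) *
          Matrix.fromCols (W * Vk) (W * ((1 - Vk * Vkᵀ) * Z2)) := by
  have hVZ : Vkᵀ * Z2 = 0 := by simpa using congrArg transpose hperp2
  rw [transpose_mul_one_sub_mul_transpose_mul_of_transpose_mul_eq_zero hperp1,
    mul_one_sub_mul_transpose_mul_of_transpose_mul_eq_zero hperp2,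
    transpose_fromCols_mul_mul_fromCols, fromRows_mul_fromCols, fromBlocks_add]
  simp only [transpose_mul_lowRank_add_mul, hUk, hVk, hperp1, hVZ, Matrix.one_mul,
    Matrix.mul_one, Matrix.zero_mul, Matrix.mul_zero, zero_add]

/-- Projected matrix of SV-RR with reduced subspaces (correcting weights):
if `Z¹`, `Z²` have orthonormal columns with `(Z¹)ᵀ U_k = 0`, `(Z²)ᵀ V_k = 0`, then for
`Ū = [U_k, Z¹]`, `V̄ = [V_k, Z²]` and `A_CW = A_k + C W` (with `A_k = U_k Σ_k V_kᵀ`),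
the projected matrix `H = Ūᵀ A_CW V̄` equals
`[[Σ_k, 0],[0, 0]] + [[U_kᵀ C],[(Z¹)ᵀ (I − U_k U_kᵀ) C]] · [W V_k, W (I − V_k V_kᵀ) Z²]`. -/
theorem projected_matrix_reduced_weights {m n k p l₁ l₂ : ℕ}
    (Uk : Matrix (Fin m) (Fin k) ℝ) (Vk : Matrix (Fin n) (Fin k) ℝ)
    (Sk : Matrix (Fin k) (Fin k) ℝ)
    (C : Matrix (Fin m) (Fin p) ℝ) (W : Matrix (Fin p) (Fin n) ℝ)
    (Z1 : Matrix (Fin m) (Fin l₁) ℝ) (Z2 : Matrix (Fin n) (Fin l₂) ℝ)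
    (hUk : Ukᵀ * Uk = 1) (hVk : Vkᵀ * Vk = 1)
    (hZ1 : Z1ᵀ * Z1 = 1) (hZ2 : Z2ᵀ * Z2 = 1)
    (hperp1 : Z1ᵀ * Uk = 0) (hperp2 : Z2ᵀ * Vk = 0) :
    (Matrix.fromCols Uk Z1)ᵀ * (Uk * Sk * Vkᵀ + C * W) * Matrix.fromCols Vk Z2 =
      Matrix.fromBlocks Sk 0 0 0 +
        Matrix.fromRows (Ukᵀ * C) (Z1ᵀ * ((1 - Uk * Ukᵀ) * C)) *
          Matrix.fromCols (W * Vk) (W * ((1 - Vk * Vkᵀ) * Z2)) :=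
  projected_matrix_reduced_weights_general Uk Vk Sk C W Z1 Z2 hUk hVk hperp1 hperp2
end

section
/- (Projected matrix for the SV-based document update.) Let U_k ∈ ℝ^{m×k} and V_k ∈ ℝ^{n×k} have orthonormal columns, Σ_k ∈ ℝ^{k×k}, A_k = U_k Σ_k V_kᵀ, D ∈ ℝ^{m×p}. Let S_l ∈ ℝ^{l×l} be diagonal, and X_l ∈ ℝ^{m×l}, Y_l ∈ ℝ^{p×l} have orthonormal columns satisfying (I − U_k U_kᵀ) D Y_l = X_l S_l and Dᵀ (I − U_k U_kᵀ) X_l = Y_l S_l, with X_lᵀ U_k = 0. Set Ū = [U_k, X_l], A_D = [A_k, D], and V = [[V_k, 0],[0, I_p]]. Then the projected matrix H = Ūᵀ A_D V ∈ ℝ^{(k+l)×(k+p)} equals H = [[Σ_k, U_kᵀ D],[0, S_l Y_lᵀ]]. -/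
/-!
Multiplying blockwise, `H` consists of `U_kᵀ A_k V_k = Σ_k`, `U_kᵀ D`, `X_lᵀ A_k V_k = 0` and
`X_lᵀ D`. Since `X_l ⊥ U_k`, the projector `I − U_k U_kᵀ` fixes `X_l`, so the second
singular-vector equation reads `Dᵀ X_l = Y_l S_l`; transposing it, with `S_l` diagonal and
hence symmetric, gives `X_lᵀ D = S_l Y_lᵀ`.
-/

open Matrix

namespace Matrix

variable {R : Type*} [CommRing R] {m k l p : Type*} [Fintype m] [Fintype k] [DecidableEq m]

theorem one_sub_mul_transpose_mul_of_transpose_mul_eq_zero_s19 {U : Matrix m k R}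
    {X : Matrix m l R} (h : Uᵀ * X = 0) : (1 - U * Uᵀ) * X = X := by
  rw [Matrix.sub_mul, Matrix.one_mul, Matrix.mul_assoc, h, Matrix.mul_zero, sub_zero]

theorem transpose_mul_eq_of_transpose_mul_proj_eq [Fintype l] {U : Matrix m k R}
    {X : Matrix m l R} {D : Matrix m p R} {Y : Matrix p l R} {S : Matrix l l R}
    (hS : S.IsDiag) (hperp : Xᵀ * U = 0) (hsv : Dᵀ * ((1 - U * Uᵀ) * X) = Y * S) :
    Xᵀ * D = S * Yᵀ := by
  have hUX : Uᵀ * X = 0 := by simpa using congrArg transpose hperp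
  rw [one_sub_mul_transpose_mul_of_transpose_mul_eq_zero_s19 hUX] at hsv
  simpa [hS.isSymm.eq] using congrArg transpose hsv

end Matrix

theorem projected_matrix_sv_documents_general {m n k p l : ℕ}
    (Uk : Matrix (Fin m) (Fin k) ℝ) (Vk : Matrix (Fin n) (Fin k) ℝ)
    (Sk : Matrix (Fin k) (Fin k) ℝ) (D : Matrix (Fin m) (Fin p) ℝ)
    (Xl : Matrix (Fin m) (Fin l) ℝ) (Yl : Matrix (Fin p) (Fin l) ℝ)
    (Sl : Matrix (Fin l) (Fin l) ℝ)
    (hUk : Ukᵀ * Uk = 1) (hVk : Vkᵀ * Vk = 1)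
    (hSl : Sl.IsDiag) (hperp : Xlᵀ * Uk = 0)
    (hsvd2 : Dᵀ * ((1 - Uk * Ukᵀ) * Xl) = Yl * Sl) :
    (Matrix.fromCols Uk Xl)ᵀ *
        Matrix.fromCols (Uk * Sk * Vkᵀ) D *
        Matrix.fromBlocks Vk 0 0 (1 : Matrix (Fin p) (Fin p) ℝ) =
      Matrix.fromBlocks Sk (Ukᵀ * D) 0 (Sl * Ylᵀ) := by
  have hXD : Xlᵀ * D = Sl * Ylᵀ := transpose_mul_eq_of_transpose_mul_proj_eq hSl hperp hsvd2
  have hSk : Ukᵀ * (Uk * Sk * Vkᵀ) * Vk = Sk := by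
    simp only [← Matrix.mul_assoc, hUk, Matrix.one_mul]
    rw [Matrix.mul_assoc, hVk, Matrix.mul_one]
  have hXA : Xlᵀ * (Uk * Sk * Vkᵀ) * Vk = 0 := by
    simp only [← Matrix.mul_assoc, hperp, Matrix.zero_mul]
  rw [transpose_fromCols, fromRows_mul_fromCols, fromBlocks_multiply]
  simp only [Matrix.mul_zero, Matrix.mul_one, add_zero, zero_add, hSk, hXA, hXD]

/-- Projected matrix for the SV-based document update: if `(S_l, X_l, Y_l)` are
`l` dominant singular values/vectors of `(I − U_k U_kᵀ) D` (so
`(I − U_k U_kᵀ) D Y_l = X_l S_l` and `Dᵀ (I − U_k U_kᵀ) X_l = Y_l S_l`, with `S_l`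
diagonal, `X_l`, `Y_l` having orthonormal columns and `X_lᵀ U_k = 0`), then for
`Ū = [U_k, X_l]`, `A_D = [A_k, D]` (with `A_k = U_k Σ_k V_kᵀ`) and
`V = [[V_k, 0],[0, I_p]]`, the projected matrix `H = Ūᵀ A_D V` equals
`[[Σ_k, U_kᵀ D],[0, S_l Y_lᵀ]]`. -/
theorem projected_matrix_sv_documents {m n k p l : ℕ}
    (Uk : Matrix (Fin m) (Fin k) ℝ) (Vk : Matrix (Fin n) (Fin k) ℝ)
    (Sk : Matrix (Fin k) (Fin k) ℝ) (D : Matrix (Fin m) (Fin p) ℝ)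
    (Xl : Matrix (Fin m) (Fin l) ℝ) (Yl : Matrix (Fin p) (Fin l) ℝ)
    (Sl : Matrix (Fin l) (Fin l) ℝ)
    (hUk : Ukᵀ * Uk = 1) (hVk : Vkᵀ * Vk = 1)
    (hXl : Xlᵀ * Xl = 1) (hYl : Ylᵀ * Yl = 1)
    (hSl : Sl.IsDiag) (hperp : Xlᵀ * Uk = 0)
    (hsvd1 : (1 - Uk * Ukᵀ) * D * Yl = Xl * Sl)
    (hsvd2 : Dᵀ * ((1 - Uk * Ukᵀ) * Xl) = Yl * Sl) :
    (Matrix.fromCols Uk Xl)ᵀ *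
        Matrix.fromCols (Uk * Sk * Vkᵀ) D *
        Matrix.fromBlocks Vk 0 0 (1 : Matrix (Fin p) (Fin p) ℝ) =
      Matrix.fromBlocks Sk (Ukᵀ * D) 0 (Sl * Ylᵀ) :=
  projected_matrix_sv_documents_general Uk Vk Sk D Xl Yl Sl hUk hVk hSl hperp hsvd2
end
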